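/- arXiv:math/0403281 — 4 statements merged into one kernel-verified Lean document; each statement's English description precedes it below -/
import Mathlib

section
/- For 0 ≤ p ≤ 1, the coordinatewise power map x ↦ (x_1^p, ..., x_n^p) on the open positive orthant of ℝⁿ is a p-contraction of Hilbert's projective metric: d(x^p, y^p) ≤ p·d(x,y). -/
theorem stmt9 (n : ℕ) (hn : 0 < n) (x y : Fin n → ℝ)
    (hx : ∀ i, 0 < x i) (hy : ∀ i, 0 < y i)
    (p : ℝ) (hp0 : 0 ≤ p) (hp1 : p ≤ 1) :
    Real.log ((⨆ i, x i ^ p / y i ^ p) / (⨅ i, x i ^ p / y i ^ p)) ≤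
    p * Real.log ((⨆ i, x i / y i) / (⨅ i, x i / y i)) := by
  haveI : Nonempty (Fin n) := ⟨⟨0, hn⟩⟩
  set r : Fin n → ℝ := fun i => x i / y i with hr
  have hrpos : ∀ i, 0 < r i := fun i => div_pos (hx i) (hy i)
  have hdiv : ∀ i, x i ^ p / y i ^ p = r i ^ p := fun i =>
    (Real.div_rpow (hx i).le (hy i).le p).symm
  set M : ℝ := ⨆ i, r i with hM
  set m : ℝ := ⨅ i, r i with hm
  obtain ⟨iM, hiM⟩ := exists_eq_ciSup_of_finite (f := r)
  obtain ⟨im, him⟩ := exists_eq_ciInf_of_finite (f := r)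
  have hMpos : 0 < M := by rw [hM, ← hiM]; exact hrpos iM
  have hmpos : 0 < m := by rw [hm, ← him]; exact hrpos im
  have hle : ∀ i, r i ≤ M := fun i => le_ciSup (Set.Finite.bddAbove (Set.finite_range r)) i
  have hge : ∀ i, m ≤ r i := fun i => ciInf_le (Set.Finite.bddBelow (Set.finite_range r)) i
  have hsup : (⨆ i, x i ^ p / y i ^ p) = M ^ p := by
    simp only [hdiv]
    apply le_antisymm
    · exact ciSup_le fun i => Real.rpow_le_rpow (hrpos i).le (hle i) hp0
    · calc M ^ p = r iM ^ p := by rw [hiM]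
        _ ≤ ⨆ i, r i ^ p := le_ciSup (f := fun i => r i ^ p) (Set.Finite.bddAbove (Set.finite_range _)) iM
  have hinf : (⨅ i, x i ^ p / y i ^ p) = m ^ p := by
    simp only [hdiv]
    apply le_antisymm
    · calc (⨅ i, r i ^ p) ≤ r im ^ p := ciInf_le (f := fun i => r i ^ p) (Set.Finite.bddBelow (Set.finite_range _)) im
        _ = m ^ p := by rw [him]
    · exact le_ciInf fun i => Real.rpow_le_rpow hmpos.le (hge i) hp0
  rw [hsup, hinf, ← Real.div_rpow hMpos.le hmpos.le,
    Real.log_rpow (div_pos hMpos hmpos)]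
end

section
/- For any real p with |p| ≤ 1, the coordinatewise power map x ↦ x^p on the open positive orthant of ℝⁿ satisfies d(x^p, y^p) ≤ |p|·d(x,y) for Hilbert's projective metric d. -/
private lemma ciSup_eq_max {n : ℕ} [Nonempty (Fin n)] (f : Fin n → ℝ) (j : Fin n) (hj : ∀ i, f i ≤ f j) :
    (⨆ i, f i) = f j :=
  le_antisymm (ciSup_le hj) (le_ciSup (Set.Finite.bddAbove (Set.finite_range f)) j)

private lemma ciInf_eq_min {n : ℕ} [Nonempty (Fin n)] (f : Fin n → ℝ) (j : Fin n) (hj : ∀ i, f j ≤ f i) :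
    (⨅ i, f i) = f j :=
  le_antisymm (ciInf_le (Set.Finite.bddBelow (Set.finite_range f)) j) (le_ciInf hj)

theorem stmt10 (n : ℕ) (hn : 0 < n) (x y : Fin n → ℝ)
    (hx : ∀ i, 0 < x i) (hy : ∀ i, 0 < y i)
    (p : ℝ) (hp : |p| ≤ 1) :
    Real.log ((⨆ i, x i ^ p / y i ^ p) / (⨅ i, x i ^ p / y i ^ p)) ≤
    |p| * Real.log ((⨆ i, x i / y i) / (⨅ i, x i / y i)) := by
  haveI : Nonempty (Fin n) := ⟨⟨0, hn⟩⟩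
  set r : Fin n → ℝ := fun i => x i / y i with hr
  have hrpos : ∀ i, 0 < r i := fun i => div_pos (hx i) (hy i)
  have hpow : ∀ i, x i ^ p / y i ^ p = r i ^ p := fun i =>
    (Real.div_rpow (hx i).le (hy i).le p).symm
  simp only [hpow]
  obtain ⟨jM, hjM⟩ := Finite.exists_max r
  obtain ⟨jm, hjm⟩ := Finite.exists_min r
  have hM : (⨆ i, r i) = r jM := ciSup_eq_max r jM hjM
  have hm : (⨅ i, r i) = r jm := ciInf_eq_min r jm hjm
  rcases le_or_gt 0 p with hp0 | hp0
  · have hMp : (⨆ i, r i ^ p) = r jM ^ p :=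
      ciSup_eq_max _ jM (fun i => Real.rpow_le_rpow (hrpos i).le (hjM i) hp0)
    have hmp : (⨅ i, r i ^ p) = r jm ^ p :=
      ciInf_eq_min _ jm (fun i => Real.rpow_le_rpow (hrpos jm).le (hjm i) hp0)
    rw [hMp, hmp, hM, hm, ← Real.div_rpow (hrpos jM).le (hrpos jm).le,
      Real.log_rpow (div_pos (hrpos jM) (hrpos jm)), abs_of_nonneg hp0]
  · have hMp : (⨆ i, r i ^ p) = r jm ^ p :=
      ciSup_eq_max _ jm (fun i => Real.rpow_le_rpow_of_nonpos (hrpos jm) (hjm i) hp0.le)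
    have hmp : (⨅ i, r i ^ p) = r jM ^ p :=
      ciInf_eq_min _ jM (fun i => Real.rpow_le_rpow_of_nonpos (hrpos i) (hjM i) hp0.le)
    have h1 : r jm ^ p / r jM ^ p = (r jM / r jm) ^ (-p) := by
      rw [Real.rpow_neg (div_pos (hrpos jM) (hrpos jm)).le,
        ← Real.inv_rpow (div_pos (hrpos jM) (hrpos jm)).le, inv_div,
        Real.div_rpow (hrpos jm).le (hrpos jM).le]
    rw [hMp, hmp, hM, hm, h1, Real.log_rpow (div_pos (hrpos jM) (hrpos jm)),
      abs_of_neg hp0]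
end

section
/- For x, y in the open positive orthant of ℝⁿ with max_i x_i = max_i y_i = 1, the sup-norm distance satisfies ‖x − y‖_∞ ≤ e^{d(x,y)} − 1, where d is Hilbert's projective metric. -/
theorem stmt12 (n : ℕ) (hn : 0 < n) (x y : Fin n → ℝ)
    (hx : ∀ i, 0 < x i) (hy : ∀ i, 0 < y i)
    (hxn : (⨆ i, x i) = 1) (hyn : (⨆ i, y i) = 1) :
    (⨆ i, |x i - y i|) ≤
      Real.exp (Real.log ((⨆ i, x i / y i) / (⨅ i, x i / y i))) - 1 := by
  have hne : Nonempty (Fin n) := ⟨⟨0, hn⟩⟩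
  set M := ⨆ i, x i / y i with hM
  set m := ⨅ i, x i / y i with hm
  -- attained values
  obtain ⟨i0, hi0⟩ : ∃ i, x i = ⨆ j, x j := by
    obtain ⟨i, hi⟩ := Finite.exists_max x
    exact ⟨i, le_antisymm (le_ciSup (Finite.bddAbove_range x) i) (ciSup_le hi)⟩
  obtain ⟨j0, hj0⟩ : ∃ j, y j = ⨆ i, y i := by
    obtain ⟨j, hj⟩ := Finite.exists_max y
    exact ⟨j, le_antisymm (le_ciSup (Finite.bddAbove_range y) j) (ciSup_le hj)⟩
  obtain ⟨k0, hk0⟩ : ∃ k, x k / y k = m := by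
    obtain ⟨k, hk⟩ := Finite.exists_min (fun i => x i / y i)
    exact ⟨k, le_antisymm (le_ciInf hk) (ciInf_le (Finite.bddBelow_range _) k)⟩
  have hyle : ∀ i, y i ≤ 1 := fun i => hyn ▸ le_ciSup (Finite.bddAbove_range y) i
  have hxle : ∀ i, x i ≤ 1 := fun i => hxn ▸ le_ciSup (Finite.bddAbove_range x) i
  have hm0 : 0 < m := hk0 ▸ div_pos (hx k0) (hy k0)
  have hm1 : m ≤ 1 := by
    calc m ≤ x j0 / y j0 := ciInf_le (Finite.bddBelow_range _) j0
    _ = x j0 := by rw [hj0, hyn, div_one]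
    _ ≤ 1 := hxle j0
  have hM1 : 1 ≤ M := by
    have : (1:ℝ) ≤ x i0 / y i0 := by
      rw [hi0, hxn]
      rw [le_div_iff₀ (hy i0), one_mul]
      exact hyle i0
    exact this.trans (le_ciSup (f := fun i => x i / y i) (Finite.bddAbove_range _) i0)
  have hMm1 : M ≤ M / m := by
    rw [le_div_iff₀ hm0]
    nlinarith
  have hMm2 : 2 - m ≤ M / m := by
    rw [le_div_iff₀ hm0]
    nlinarith [sq_nonneg (m - 1)]
  have hexp : Real.exp (Real.log (M / m)) = M / m :=
    Real.exp_log (div_pos (lt_of_lt_of_le one_pos hM1) hm0)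
  rw [hexp]
  apply ciSup_le
  intro i
  have hxM : x i ≤ M * y i := by
    have := le_ciSup (Finite.bddAbove_range fun i => x i / y i) i
    rw [div_le_iff₀ (hy i)] at this
    exact this
  have hmx : m * y i ≤ x i := by
    have := ciInf_le (Finite.bddBelow_range fun i => x i / y i) i
    rw [le_div_iff₀ (hy i)] at this
    exact this
  rw [abs_sub_le_iff]
  constructor
  · have : x i - y i ≤ (M - 1) * y i := by nlinarith
    have h2 : (M - 1) * y i ≤ M - 1 := by nlinarith [(hy i).le, hyle i]
    linarith
  · have : y i - x i ≤ (1 - m) * y i := by nlinarith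
    have h2 : (1 - m) * y i ≤ 1 - m := by nlinarith [(hy i).le, hyle i]
    linarith
end

section
/- For x, y in the open positive orthant of ℝⁿ with max_i x_i = max_i y_i = 1 and ‖x − y‖_∞ < min_i y_i, one has ‖x − y‖_∞ ≥ (min_i y_i)·tanh(d(x,y)/2), where d is Hilbert's projective metric. -/
lemma tanh_log_div_two {t : ℝ} (ht : 0 < t) :
    Real.tanh (Real.log t / 2) = (t - 1) / (t + 1) := by
  have hs : Real.exp (Real.log t / 2) ^ 2 = t := by
    rw [sq, ← Real.exp_add]
    rw [show Real.log t / 2 + Real.log t / 2 = Real.log t by ring, Real.exp_log ht]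
  rw [Real.tanh_eq_sinh_div_cosh, Real.sinh_eq, Real.cosh_eq]
  set s := Real.exp (Real.log t / 2) with hsdef
  have hspos : 0 < s := Real.exp_pos _
  rw [Real.exp_neg, ← hsdef]
  have hs0 : s ≠ 0 := hspos.ne'
  rw [← hs]
  field_simp

theorem stmt13 (n : ℕ) (hn : 0 < n) (x y : Fin n → ℝ)
    (hx : ∀ i, 0 < x i) (hy : ∀ i, 0 < y i)
    (hxn : (⨆ i, x i) = 1) (hyn : (⨆ i, y i) = 1)
    (hlt : (⨆ i, |x i - y i|) < ⨅ i, y i) :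
    (⨅ i, y i) * Real.tanh (Real.log ((⨆ i, x i / y i) / (⨅ i, x i / y i)) / 2) ≤
      ⨆ i, |x i - y i| := by
  haveI : Nonempty (Fin n) := ⟨⟨0, hn⟩⟩
  set ε := ⨆ i, |x i - y i| with hε
  set lam := ⨅ i, y i with hlam
  set M := ⨆ i, x i / y i with hM
  set m := ⨅ i, x i / y i with hm
  obtain ⟨i0⟩ := (inferInstance : Nonempty (Fin n))
  have hεy : ∀ i, |x i - y i| ≤ ε := fun i => le_ciSup (f := fun j => |x j - y j|) (Set.Finite.bddAbove (Set.finite_range _)) i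
  have hεnn : 0 ≤ ε := le_trans (abs_nonneg _) (hεy i0)
  have hlampos : 0 < lam := lt_of_le_of_lt hεnn hlt
  have hlamy : ∀ i, lam ≤ y i := fun i => ciInf_le (f := y) (Set.Finite.bddBelow (Set.finite_range _)) i
  have hMle : M ≤ (lam + ε) / lam := by
    apply ciSup_le
    intro i
    have h1 : x i ≤ y i + ε := by have := abs_le.1 (hεy i); linarith [this.2]
    rw [div_le_div_iff₀ (hy i) hlampos]
    have h2 := hlamy i
    nlinarith [hεnn, (hy i)]
  have hmge : (lam - ε) / lam ≤ m := by
    apply le_ciInf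
    intro i
    have h1 : y i - ε ≤ x i := by have := abs_le.1 (hεy i); linarith [this.1]
    rw [div_le_div_iff₀ hlampos (hy i)]
    have h2 := hlamy i
    nlinarith [hεnn, (hy i)]
  have hmpos : 0 < m := by
    have : (0:ℝ) < (lam - ε) / lam := by
      apply div_pos (by linarith) hlampos
    linarith [hmge]
  have hMpos : 0 < M := lt_of_lt_of_le (div_pos (hx i0) (hy i0))
    (le_ciSup (f := fun j => x j / y j) (Set.Finite.bddAbove (Set.finite_range _)) i0)
  have hupos : 0 < M / m := div_pos hMpos hmpos
  rw [tanh_log_div_two hupos]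
  have hub : M / m ≤ (lam + ε) / (lam - ε) := by
    rw [div_le_div_iff₀ hmpos (by linarith)]
    calc M * (lam - ε) ≤ ((lam + ε)/lam) * (lam - ε) := by
          apply mul_le_mul_of_nonneg_right hMle (by linarith)
      _ ≤ (lam + ε) * m := by
          rw [div_mul_eq_mul_div, div_le_iff₀ hlampos]
          calc (lam + ε) * (lam - ε) = (lam + ε) * ((lam - ε)/lam * lam) := by
                field_simp
            _ ≤ (lam + ε) * (m * lam) := by
                apply mul_le_mul_of_nonneg_left _ (by linarith)
                exact mul_le_mul_of_nonneg_right hmge (le_of_lt hlampos)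
            _ = (lam + ε) * m * lam := by ring
  set u := M / m
  have hfrac : (u - 1) / (u + 1) ≤ ε / lam := by
    have hub' : u * (lam - ε) ≤ lam + ε := (le_div_iff₀ (by linarith)).mp hub
    rw [div_le_div_iff₀ (by linarith) hlampos]
    nlinarith [hub']
  calc lam * ((u - 1)/(u + 1)) ≤ lam * (ε / lam) := by
        apply mul_le_mul_of_nonneg_left hfrac (le_of_lt hlampos)
    _ = ε := by field_simp
end
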